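/- arXiv:1507.06175 — 2 statements merged into one kernel-verified Lean document; each statement's English description precedes it below -/
import Mathlib

section
/- For every integer k with 1 ≤ k ≤ n and every binary string x of length n, the number of binary strings y of length n with y ≠ x such that x and y are k-confusable is at most 2n^{2k}. -/
/-- `Subseq k x` is the set of all subsequences of `x` obtained by deleting exactly `k` symbols,
i.e. all subsequences of `x` of length `|x| - k`. -/
def Subseq {α : Type*} (k : ℕ) (x : List α) : Set (List α) :=
  {y | y.Sublist x ∧ y.length + k = x.length}

/-- Two strings are `k`-confusable if they have a common output on the `k`-deletion channel. -/
def Confusable {α : Type*} (k : ℕ) (x y : List α) : Prop :=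
  (Subseq k x ∩ Subseq k y).Nonempty

/-!
A string `y` confusable with `x` is a supersequence of length `n` of some `z` obtained from `x`
by deleting `k` symbols. There are at most `C(n, k)` such `z`, and a binary string of length
`n - k` has at most `∑_{i ≤ k} C(n, i) ≤ (k + 1) n ^ k` supersequences of length `n` (split on
the first symbol and use Pascal's rule). Finally `C(n, k) ≤ n ^ k / k!` and `k + 1 ≤ 2 k!`.
-/

open Finset Nat

theorem Set.ncard_biUnion_le_ncard_mul {ι α : Type*} {t : Set ι} (ht : t.Finite)
    (s : ι → Set α) (B : ℕ) (h : ∀ i ∈ t, (s i).ncard ≤ B) :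
    (⋃ i ∈ t, s i).ncard ≤ t.ncard * B :=
  calc (⋃ i ∈ t, s i).ncard ≤ ∑ i ∈ ht.toFinset, (s i).ncard := by
        simpa using ht.toFinset.set_ncard_biUnion_le s
    _ ≤ ht.toFinset.card • B := sum_le_card_nsmul _ _ _ fun i hi => h i (by simpa using hi)
    _ = t.ncard * B := by rw [smul_eq_mul, Set.ncard_eq_toFinset_card t ht]

theorem Nat.sum_range_succ_choose_succ (L m : ℕ) :
    ∑ i ∈ range (m + 2), (L + 1).choose i
      = ∑ i ∈ range (m + 2), L.choose i + ∑ i ∈ range (m + 1), L.choose i := by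
  rw [sum_range_succ' (fun i => (L + 1).choose i), sum_range_succ' (fun i => L.choose i)]
  simp only [Nat.choose_succ_succ', Nat.choose_zero_right, sum_add_distrib]
  omega

theorem Nat.choose_mul_sum_range_choose_le (n k : ℕ) :
    n.choose k * ∑ i ∈ range (k + 1), n.choose i ≤ 2 * n ^ (2 * k) := by
  rcases Nat.eq_zero_or_pos n with rfl | hn
  · cases k <;> simp
  have hsum : ∑ i ∈ range (k + 1), n.choose i ≤ (k + 1) * n ^ k := by
    simpa using sum_le_card_nsmul (range (k + 1)) (fun i => n.choose i) (n ^ k) fun i hi =>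
      (n.choose_le_pow i).trans (Nat.pow_le_pow_right hn (by simpa [Nat.lt_succ_iff] using hi))
  have hfact : k + 1 ≤ 2 * k ! := by
    have := k.self_le_factorial
    have := k.factorial_pos
    omega
  have hchoose : k ! * n.choose k ≤ n ^ k :=
    n.descFactorial_eq_factorial_mul_choose k ▸ n.descFactorial_le_pow k
  calc n.choose k * ∑ i ∈ range (k + 1), n.choose i
      ≤ n.choose k * (2 * k ! * n ^ k) := by gcongr; exact hsum.trans (by gcongr)
    _ = 2 * (k ! * n.choose k) * n ^ k := by ring
    _ ≤ 2 * n ^ k * n ^ k := by gcongr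
    _ = 2 * n ^ (2 * k) := by ring

theorem Subseq.finite {α : Type*} (k : ℕ) (x : List α) : (Subseq k x).Finite :=
  x.sublists.finite_toSet.subset fun _ hz => List.mem_sublists.mpr hz.1

theorem Subseq.ncard_le {α : Type*} (k : ℕ) (x : List α) :
    (Subseq k x).ncard ≤ x.length.choose k := by
  classical
  rcases le_or_gt k x.length with hk | hk
  · calc (Subseq k x).ncard ≤ ((x.sublistsLen (x.length - k)).toFinset : Set (List α)).ncard := by
          refine Set.ncard_le_ncard (fun z hz => ?_) (Finset.finite_toSet _)
          simp only [Finset.mem_coe, List.mem_toFinset, List.mem_sublistsLen]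
          exact ⟨hz.1, by have := hz.2; omega⟩
      _ ≤ (x.sublistsLen (x.length - k)).length := by
          rw [Set.ncard_coe_finset]; exact List.toFinset_card_le _
      _ = x.length.choose k := by rw [List.length_sublistsLen, Nat.choose_symm hk]
  · have : Subseq k x = ∅ := Set.eq_empty_of_forall_notMem fun z hz => by
      have := hz.2; omega
    simp [this]

theorem List.ncard_setOf_length_eq {α : Type*} [Fintype α] (L : ℕ) :
    {y : List α | y.length = L}.ncard = Fintype.card α ^ L := by
  rw [← Nat.card_coe_set_eq]
  exact (Nat.card_eq_fintype_card (α := List.Vector α L)).trans (card_vector L)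

theorem ncard_supersequences_le :
    ∀ (L : ℕ) (z : List Bool) (m : ℕ), z.length + m = L →
      {y : List Bool | y.length = L ∧ z.Sublist y}.ncard ≤ ∑ i ∈ range (m + 1), L.choose i
  | _, z, 0, h => by
    subst h
    have : {y : List Bool | y.length = z.length + 0 ∧ z.Sublist y} ⊆ {z} := fun y hy =>
      (hy.2.eq_of_length hy.1.symm).symm
    simpa using (Set.ncard_le_ncard this).trans (Set.ncard_singleton z).le
  | _, [], m + 1, h => by
    subst h
    simp [List.ncard_setOf_length_eq, ← Nat.sum_range_choose]
  | 0, _ :: _, _ + 1, h => by simp at h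
  | L + 1, a :: z, m + 1, h => by
    set S := {y : List Bool | y.length = L ∧ z.Sublist y}
    set T := {y : List Bool | y.length = L ∧ (a :: z).Sublist y}
    -- `b :: y` contains `a :: z` iff either `b = a` and `y` contains `z`, or `y` contains `a :: z`
    have hsub : {y : List Bool | y.length = L + 1 ∧ (a :: z).Sublist y}
        ⊆ (List.cons a '' S) ∪ (List.cons (!a) '' T) := by
      rintro (_ | ⟨b, y⟩) ⟨hlen, hzy⟩
      · simp at hlen
      have hy : y.length = L := by simpa using hlen
      rcases List.sublist_cons_iff.mp hzy with hzy | ⟨_, ⟨rfl, rfl⟩, hzy⟩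
      · by_cases hb : b = a
        · subst hb
          exact .inl ⟨y, ⟨hy, (List.sublist_cons_self _ _).trans hzy⟩, rfl⟩
        · exact .inr ⟨y, ⟨hy, hzy⟩, by rw [Bool.eq_not_iff.mpr hb]⟩
      · exact .inl ⟨y, ⟨hy, hzy⟩, rfl⟩
    have hfin : ∀ w : List Bool, {y : List Bool | y.length = L ∧ w.Sublist y}.Finite := fun _ =>
      (List.finite_length_eq Bool L).subset fun _ hy => hy.1
    calc {y : List Bool | y.length = L + 1 ∧ (a :: z).Sublist y}.ncard
        ≤ ((List.cons a '' S) ∪ (List.cons (!a) '' T)).ncard :=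
          Set.ncard_le_ncard hsub (((hfin z).image _).union ((hfin (a :: z)).image _))
      _ ≤ (List.cons a '' S).ncard + (List.cons (!a) '' T).ncard := Set.ncard_union_le _ _
      _ = S.ncard + T.ncard := by
          rw [Set.ncard_image_of_injective _ List.cons_injective,
            Set.ncard_image_of_injective _ List.cons_injective]
      _ ≤ ∑ i ∈ range (m + 2), L.choose i + ∑ i ∈ range (m + 1), L.choose i :=
          Nat.add_le_add (ncard_supersequences_le L z (m + 1) (by simp at h; omega))
            (ncard_supersequences_le L (a :: z) m (by simp at h ⊢; omega))
      _ = ∑ i ∈ range (m + 2), (L + 1).choose i := (Nat.sum_range_succ_choose_succ L m).symm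

theorem ncard_confusable_le (k : ℕ) (x : List Bool) :
    {y : List Bool | y.length = x.length ∧ Confusable k x y}.ncard
      ≤ x.length.choose k * ∑ i ∈ range (k + 1), x.length.choose i := by
  have hsub : {y : List Bool | y.length = x.length ∧ Confusable k x y}
      ⊆ ⋃ z ∈ Subseq k x, {y | y.length = x.length ∧ z.Sublist y} := by
    rintro y ⟨hy, z, hzx, hzy⟩
    exact Set.mem_biUnion hzx ⟨hy, hzy.1⟩
  calc _ ≤ (⋃ z ∈ Subseq k x, {y | y.length = x.length ∧ z.Sublist y}).ncard :=
        Set.ncard_le_ncard hsub ((Subseq.finite k x).biUnion fun _ _ =>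
          (List.finite_length_eq Bool _).subset fun _ hy => hy.1)
    _ ≤ (Subseq k x).ncard * ∑ i ∈ range (k + 1), x.length.choose i :=
        Set.ncard_biUnion_le_ncard_mul (Subseq.finite k x) _ _ fun z hz =>
          ncard_supersequences_le _ z k hz.2
    _ ≤ _ := by gcongr; exact Subseq.ncard_le k x

theorem stmt_5_general (k n : ℕ) (x : List Bool) (hx : x.length = n) :
    {y : List Bool | y.length = n ∧ y ≠ x ∧ Confusable k x y}.ncard ≤ 2 * n ^ (2 * k) := by
  subst hx
  calc _ ≤ {y : List Bool | y.length = x.length ∧ Confusable k x y}.ncard :=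
        Set.ncard_le_ncard (fun y hy => ⟨hy.1, hy.2.2⟩)
          ((List.finite_length_eq Bool _).subset fun _ hy => hy.1)
    _ ≤ _ := ncard_confusable_le k x
    _ ≤ _ := Nat.choose_mul_sum_range_choose_le _ _

theorem stmt_5 (k n : ℕ) (hk : 1 ≤ k) (hkn : k ≤ n)
    (x : List Bool) (hx : x.length = n) :
    {y : List Bool | y.length = n ∧ y ≠ x ∧ Confusable k x y}.ncard ≤ 2 * n ^ (2 * k) :=
  stmt_5_general k n x hx
end

section
/- Fix an integer k ≥ 1. There exists a constant C_k > 0 (depending only on k) such that for all sufficiently large n, there exist an integer m with m ≤ C_k·n·(log₂ log₂ n)/(log₂ n), a hash function hash₂ : {0,1}^n → {0,1}^m, and a decoding map D : {0,1}^{n−k} × {0,1}^m → {0,1}^n, such that for every s ∈ {0,1}^n and every y ∈ σ_k(s), one has D(y, hash₂(s)) = s. -/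
/-!
Call two strings of length `n` confusable when they share a subsequence of length `n - k`.
A string `s` has at most `((n + 1)² · 2)^k` confusable partners: pick one of the
`(n choose k) ≤ (n + 1)^k` subsequences of `s` of length `n - k`, then make `k` insertions,
each at one of `n + 1` positions.
Greedily colouring the confusability graph therefore needs fewer than `2^m` colours with
`m = O(k log n)`, and the colour of `s`, written in `m` bits, is the hash: among the
supersequences of `y` of length `n` (which are pairwise confusable) only `s` has that colour.
Finally `k log n` is eventually below any constant times `n · log log n / log n`.
-/

open Finset Filter Real

theorem List.Sublist.exists_sublist_eraseIdx_of_length_lt {α : Type*} {y t : List α}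
    (h : y.Sublist t) (hlt : y.length < t.length) :
    ∃ i < t.length, y.Sublist (t.eraseIdx i) := by
  induction h with
  | slnil => simp at hlt
  | cons a _ _ => exact ⟨0, by simp, by simpa⟩
  | cons_cons a _ ih =>
    obtain ⟨i, hi, hsub⟩ := ih (by simpa using hlt)
    exact ⟨i + 1, by simpa using hi, by simpa using hsub.cons_cons a⟩

theorem Nat.choose_sub_le_succ_pow (n k : ℕ) : n.choose (n - k) ≤ (n + 1) ^ k := by
  rcases le_or_gt k n with hkn | hnk
  · rw [Nat.choose_symm hkn]
    exact (Nat.choose_le_pow n k).trans (Nat.pow_le_pow_left n.le_succ k)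
  · rw [Nat.sub_eq_zero_of_le hnk.le, Nat.choose_zero_right]
    exact Nat.one_le_pow _ _ n.succ_pos

theorem SimpleGraph.nonempty_coloring_of_degree_lt {V β : Type*} (G : SimpleGraph V) [Fintype V]
    [DecidableRel G.Adj] [Fintype β] (h : ∀ v, G.degree v < Fintype.card β) :
    Nonempty (G.Coloring β) := by
  classical
  rcases isEmpty_or_nonempty V with hV | hV
  · exact ⟨Coloring.mk isEmptyElim fun {v} => isEmptyElim v⟩
  have : Nonempty β := Fintype.card_pos_iff.1 ((Nat.zero_le _).trans_lt (h hV.some))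
  suffices ∀ s : Finset V, ∃ c : V → β, ∀ v ∈ s, ∀ w ∈ s, G.Adj v w → c v ≠ c w by
    obtain ⟨c, hc⟩ := this univ
    exact ⟨Coloring.mk c fun hvw => hc _ (mem_univ _) _ (mem_univ _) hvw⟩
  intro s
  induction s using Finset.induction_on with
  | empty => exact ⟨fun _ => Classical.arbitrary β, by simp⟩
  | insert a s ha ih =>
    obtain ⟨c, hc⟩ := ih
    obtain ⟨b, -, hb⟩ := exists_mem_notMem_of_card_lt_card
      (s := (G.neighborFinset a).image c) (t := univ) (card_image_le.trans_lt (h a))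
    have hfresh : ∀ w, G.Adj a w → c w ≠ b := fun w haw hwb =>
      hb (mem_image.2 ⟨w, (G.mem_neighborFinset a w).2 haw, hwb⟩)
    refine ⟨Function.update c a b, ?_⟩
    simp only [mem_insert]
    rintro v (rfl | hv) w (rfl | hw) hvw
    · exact (hvw.ne rfl).elim
    · simpa [Function.update_apply, hvw.ne'] using (hfresh w hvw).symm
    · simpa [Function.update_apply, hvw.ne] using hfresh v hvw.symm
    · simpa [Function.update_apply, ne_of_mem_of_not_mem hv ha, ne_of_mem_of_not_mem hw ha]
        using hc v hv w hw hvw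

section Supersequences

variable {α : Type*} [Fintype α] [DecidableEq α]

/-- Contains every single insertion into `z` when `z.length ≤ N`; larger indices leave `z`
unchanged. -/
def insertions (N : ℕ) (z : List α) : Finset (List α) :=
  univ.image fun p : Fin (N + 1) × α => z.insertIdx p.1 p.2

def supersequences (N : ℕ) (y : List α) : ℕ → Finset (List α)
  | 0 => {y}
  | j + 1 => (supersequences N y j).biUnion (insertions N)

theorem card_insertions_le (N : ℕ) (z : List α) :
    #(insertions N z) ≤ (N + 1) * Fintype.card α :=
  card_image_le.trans (by simp)

theorem card_supersequences_le (N : ℕ) (y : List α) (j : ℕ) :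
    #(supersequences N y j) ≤ ((N + 1) * Fintype.card α) ^ j := by
  induction j with
  | zero => simp [supersequences]
  | succ j ih =>
    calc #(supersequences N y (j + 1))
        ≤ #(supersequences N y j) * ((N + 1) * Fintype.card α) :=
          card_biUnion_le_card_mul _ _ _ fun z _ => card_insertions_le N z
      _ ≤ ((N + 1) * Fintype.card α) ^ (j + 1) := by
          rw [pow_succ]; exact Nat.mul_le_mul_right _ ih

theorem mem_supersequences {N j : ℕ} {y t : List α} (h : y.Sublist t)
    (hlen : y.length + j = t.length) (hN : t.length ≤ N) : t ∈ supersequences N y j := by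
  induction j generalizing t with
  | zero => simp [supersequences, (h.eq_of_length (by omega)).symm]
  | succ j ih =>
    obtain ⟨i, hi, hsub⟩ := h.exists_sublist_eraseIdx_of_length_lt (by omega)
    have hlen' := List.length_eraseIdx_add_one hi
    refine mem_biUnion.2 ⟨t.eraseIdx i, ih hsub (by omega) (by omega), ?_⟩
    exact mem_image.2 ⟨(⟨i, by omega⟩, t[i]), mem_univ _, List.insertIdx_eraseIdx_getElem hi⟩

end Supersequences

section Confusability

variable {α : Type*}

def confusabilityGraph (k n : ℕ) : SimpleGraph (List.Vector α n) where
  Adj s t := s ≠ t ∧ ∃ y, y ∈ Subseq k s.toList ∧ y ∈ Subseq k t.toList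
  symm := ⟨fun _ _ ⟨hne, y, hs, ht⟩ => ⟨hne.symm, y, ht, hs⟩⟩
  loopless := ⟨fun _ h => h.1 rfl⟩

variable {k n : ℕ}

theorem confusabilityGraph_degree_le [Fintype α] [DecidableEq α]
    [DecidableRel (confusabilityGraph (α := α) k n).Adj] (s : List.Vector α n) :
    (confusabilityGraph k n).degree s ≤ ((n + 1) ^ 2 * Fintype.card α) ^ k := by
  set T := (s.toList.sublistsLen (n - k)).toFinset.biUnion fun y => supersequences n y k
  have hsub : ((confusabilityGraph k n).neighborFinset s).map
      ⟨List.Vector.toList, List.Vector.toList_injective⟩ ⊆ T := by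
    intro t ht
    obtain ⟨t, hst, rfl⟩ := mem_map.1 ht
    obtain ⟨-, y, ⟨hys, hyl⟩, hyt, -⟩ := (SimpleGraph.mem_neighborFinset _ _ _).1 hst
    simp only [List.Vector.toList_length] at hyl
    refine mem_biUnion.2 ⟨y, List.mem_toFinset.2 (List.mem_sublistsLen.2 ⟨hys, by omega⟩), ?_⟩
    exact mem_supersequences hyt (by simpa using hyl) (by simp)
  calc (confusabilityGraph k n).degree s ≤ #T := by
        rw [← SimpleGraph.card_neighborFinset_eq_degree, ← card_map]; exact card_le_card hsub
    _ ≤ #(s.toList.sublistsLen (n - k)).toFinset * ((n + 1) * Fintype.card α) ^ k :=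
        card_biUnion_le_card_mul _ _ _ fun y _ => card_supersequences_le n y k
    _ ≤ (n + 1) ^ k * ((n + 1) * Fintype.card α) ^ k := by
        gcongr
        refine (List.toFinset_card_le _).trans ?_
        simpa [List.length_sublistsLen] using Nat.choose_sub_le_succ_pow n k
    _ = ((n + 1) ^ 2 * Fintype.card α) ^ k := by rw [← mul_pow, ← mul_assoc, sq]

theorem eq_of_coloring_eq_of_mem_subseq {β : Type*}
    (c : (confusabilityGraph (α := α) k n).Coloring β) {s t : List.Vector α n} {y : List α}
    (hs : y ∈ Subseq k s.toList) (ht : y ∈ Subseq k t.toList)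
    (hc : c s = c t) : s = t := by
  by_contra hne
  exact c.valid (show (confusabilityGraph k n).Adj s t from ⟨hne, y, hs, ht⟩) hc

end Confusability

theorem exists_hash_decoder {α : Type*} [Fintype α] [DecidableEq α] (k n m : ℕ)
    (hm : ((n + 1) ^ 2 * Fintype.card α) ^ k < 2 ^ m) :
    ∃ (hash : List α → List Bool) (D : List α → List Bool → List α),
      (∀ s : List α, s.length = n → (hash s).length = m) ∧
      (∀ s : List α, s.length = n → ∀ y ∈ Subseq k s, D y (hash s) = s) := by
  classical
  obtain ⟨c⟩ := (confusabilityGraph (α := α) k n).nonempty_coloring_of_degree_lt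
    (β := List.Vector Bool m) fun s => by
      simpa [card_vector] using (confusabilityGraph_degree_le s).trans_lt hm
  let hash (s : List α) : List Bool :=
    if h : s.length = n then (c ⟨s, h⟩).toList else List.replicate m false
  refine ⟨hash,
    fun y h => Classical.epsilon fun t => t.length = n ∧ y ∈ Subseq k t ∧ hash t = h,
    fun s hs => by simp [hash, hs], fun s hs y hy => ?_⟩
  beta_reduce
  obtain ⟨ht, hyt, hhash⟩ := Classical.epsilon_spec (p := fun t =>
    t.length = n ∧ y ∈ Subseq k t ∧ hash t = hash s) ⟨s, hs, hy, rfl⟩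
  generalize Classical.epsilon (α := List α) _ = t at ht hyt hhash ⊢
  simp only [hash, dif_pos ht, dif_pos hs] at hhash
  exact congrArg List.Vector.toList <| eq_of_coloring_eq_of_mem_subseq c (s := ⟨t, ht⟩)
    (t := ⟨s, hs⟩) hyt hy (List.Vector.toList_injective hhash)

theorem succ_sq_mul_two_pow_lt (n k : ℕ) :
    ((n + 1) ^ 2 * 2) ^ k < 2 ^ (k * (2 * Nat.log 2 n + 3) + 1) := by
  have hn : n + 1 ≤ 2 ^ (Nat.log 2 n + 1) := Nat.lt_pow_succ_log_self one_lt_two n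
  calc ((n + 1) ^ 2 * 2) ^ k ≤ ((2 ^ (Nat.log 2 n + 1)) ^ 2 * 2) ^ k := by gcongr
    _ = 2 ^ (k * (2 * Nat.log 2 n + 3)) := by
        rw [← pow_mul, ← pow_succ, ← pow_mul]; ring_nf
    _ < 2 ^ (k * (2 * Nat.log 2 n + 3) + 1) := Nat.pow_lt_pow_succ one_lt_two

theorem eventually_logb_le_mul_logb_logb_div_logb :
    ∀ᶠ x : ℝ in atTop, logb 2 x ≤ x * logb 2 (logb 2 x) / logb 2 x := by
  have hlog2 : 0 < log 2 := log_pos one_lt_two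
  have hsq := Real.isLittleO_pow_log_id_atTop (n := 2) |>.bound (pow_pos hlog2 2)
  filter_upwards [hsq, eventually_gt_atTop 0,
    tendsto_logb_atTop one_lt_two |>.eventually_gt_atTop 0,
    (tendsto_logb_atTop one_lt_two).comp (tendsto_logb_atTop one_lt_two) |>.eventually_ge_atTop 1]
    with x hx hx0 hL hLL
  have hLsq : logb 2 x ^ 2 ≤ x := by
    rw [logb, div_pow, div_le_iff₀ (pow_pos hlog2 2)]
    simpa [abs_of_pos hx0, mul_comm] using hx
  rw [le_div_iff₀ hL, ← sq]
  exact hLsq.trans (le_mul_of_one_le_right hx0.le hLL)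

theorem stmt_7 (k : ℕ) (hk : 1 ≤ k) :
    ∃ C : ℝ, 0 < C ∧ ∃ n₀ : ℕ, ∀ n : ℕ, n₀ ≤ n →
      ∃ m : ℕ, (m : ℝ) ≤ C * (n : ℝ) * Real.logb 2 (Real.logb 2 n) / Real.logb 2 n ∧
        ∃ (hash₂ : List Bool → List Bool) (D : List Bool → List Bool → List Bool),
          (∀ s : List Bool, s.length = n → (hash₂ s).length = m) ∧
          (∀ s : List Bool, s.length = n → ∀ y ∈ Subseq k s, D y (hash₂ s) = s) := by
  refine ⟨6 * k, by positivity, ?_⟩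
  have hk' : (1 : ℝ) ≤ k := by exact_mod_cast hk
  have hev : ∀ᶠ n : ℕ in atTop, ((k * (2 * Nat.log 2 n + 3) + 1 : ℕ) : ℝ) ≤
      6 * k * n * logb 2 (logb 2 n) / logb 2 n := by
    filter_upwards
      [tendsto_natCast_atTop_atTop.eventually eventually_logb_le_mul_logb_logb_div_logb,
        tendsto_natCast_atTop_atTop.eventually
          (tendsto_logb_atTop one_lt_two |>.eventually_ge_atTop 1)]
      with n hn hL
    have hlog := Real.natLog_le_logb n 2
    push_cast at hlog ⊢
    calc (k * (2 * Nat.log 2 n + 3) + 1 : ℝ) ≤ 6 * k * logb 2 n := by nlinarith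
      _ ≤ 6 * k * (n * logb 2 (logb 2 n) / logb 2 n) := by gcongr
      _ = 6 * k * n * logb 2 (logb 2 n) / logb 2 n := by ring
  obtain ⟨n₀, hn₀⟩ := eventually_atTop.1 hev
  exact ⟨n₀, fun n hn => ⟨_, hn₀ n hn,
    exists_hash_decoder k n _ (by simpa using succ_sq_mul_two_pow_lt n k)⟩⟩
end
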